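/- Let B be a Young function with b its derivative and B̃ its conjugate, satisfying B̃ ∈ Δ₂ (i.e., t·b⁻¹(t) ≤ c·B̃(t) for some constant c) and B̃(t)/t^{s'} non-decreasing for some s' > 1. Then there is a constant C such that ∫_t^∞ dr/(r·b⁻¹(r)) ≤ C/b⁻¹(t) for all t > 0, where b⁻¹ is the left-continuous inverse of b. -/
import Mathlib


open MeasureTheory

/-- under `B̃ ∈ Δ₂` (in the form `t·b⁻¹(t) ≤ c·B̃(t)`), `B̃(t)/t^{s'}`
non-decreasing for some `s' > 1`, and `B̃(r) ≤ r·b⁻¹(r)`, there is a constant `C`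
with `∫_t^∞ dr/(r·b⁻¹(r)) ≤ C/b⁻¹(t)` for all `t > 0`. -/
theorem tail_integral_binv_bound
    (Btilde binv : ℝ → ℝ) (s' c : ℝ) (hs' : 1 < s')
    (hpos : ∀ r, 0 < r → 0 < Btilde r)
    (hbpos : ∀ r, 0 < r → 0 < binv r)
    (hmono : MonotoneOn (fun r : ℝ => Btilde r / r ^ s') (Set.Ioi 0))
    (hle : ∀ r, 0 < r → Btilde r ≤ r * binv r)
    (hΔ : ∀ r, 0 < r → r * binv r ≤ c * Btilde r) :
    ∃ C : ℝ, ∀ t : ℝ, 0 < t →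
      ∫ r in Set.Ioi t, 1 / (r * binv r) ≤ C / binv t := by
  have hc : 0 < c := by
    have h1 := hΔ 1 one_pos
    have h2 := hbpos 1 one_pos
    have h3 := hpos 1 one_pos
    nlinarith
  refine ⟨c / (s' - 1), fun t ht => ?_⟩
  have hbt := hbpos t ht
  have hBt := hpos t ht
  have hs1 : (0:ℝ) < s' - 1 := by linarith
  have hC : 0 ≤ c / (s' - 1) / binv t := div_nonneg (div_nonneg hc.le hs1.le) hbt.le
  by_cases hint : IntegrableOn (fun r : ℝ => 1 / (r * binv r)) (Set.Ioi t)
  · have hgint : IntegrableOn (fun r : ℝ => (t ^ s' / Btilde t) * r ^ (-s')) (Set.Ioi t) :=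
      (integrableOn_Ioi_rpow_of_lt (by linarith) ht).const_mul _
    have hle' : ∀ r ∈ Set.Ioi t, 1 / (r * binv r) ≤ (t ^ s' / Btilde t) * r ^ (-s') := by
      intro r hr
      have hrt : t < r := hr
      have hr0 : 0 < r := ht.trans hrt
      have hbr := hbpos r hr0
      have hBr := hpos r hr0
      have hts : (0:ℝ) < t ^ s' := Real.rpow_pos_of_pos ht _
      have hrs : (0:ℝ) < r ^ s' := Real.rpow_pos_of_pos hr0 _
      have hm : Btilde t / t ^ s' ≤ Btilde r / r ^ s' :=
        hmono (Set.mem_Ioi.mpr ht) (Set.mem_Ioi.mpr hr0) hrt.le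
      rw [div_le_div_iff₀ hts hrs] at hm
      have heq : t ^ s' / Btilde t * r ^ (-s') = t ^ s' / (Btilde t * r ^ s') := by
        rw [Real.rpow_neg hr0.le]
        field_simp
      rw [heq]
      have h1 : 1 / (r * binv r) ≤ 1 / Btilde r :=
        one_div_le_one_div_of_le hBr (hle r hr0)
      refine h1.trans ?_
      rw [div_le_div_iff₀ hBr (by positivity)]
      nlinarith
    calc ∫ r in Set.Ioi t, 1 / (r * binv r)
        ≤ ∫ r in Set.Ioi t, (t ^ s' / Btilde t) * r ^ (-s') :=
          setIntegral_mono_on hint hgint measurableSet_Ioi hle'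
      _ = (t ^ s' / Btilde t) * ∫ r in Set.Ioi t, r ^ (-s') := by
          rw [integral_const_mul]
      _ = (t ^ s' / Btilde t) * (-t ^ (-s' + 1) / (-s' + 1)) := by
          rw [integral_Ioi_rpow_of_lt (by linarith) ht]
      _ = t / ((s' - 1) * Btilde t) := by
          have hpow : t ^ s' * t ^ (-s' + 1) = t := by
            rw [← Real.rpow_add ht]
            simp
          rw [div_mul_div_comm, mul_neg, hpow]
          rw [div_eq_div_iff (by nlinarith : Btilde t * (-s' + 1) ≠ 0)
            (mul_pos hs1 hBt).ne']
          ring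
      _ ≤ c / (s' - 1) / binv t := by
          rw [div_le_div_iff₀ (mul_pos hs1 hBt) hbt]
          have h2 := hΔ t ht
          calc t * binv t ≤ c * Btilde t := h2
            _ ≤ c / (s' - 1) * ((s' - 1) * Btilde t) := by
                rw [div_mul_eq_mul_div, mul_div_assoc]
                rw [mul_comm (s' - 1) (Btilde t), mul_div_assoc]
                rw [div_self hs1.ne']
                ring_nf
                exact le_refl _
  · rw [integral_undef hint]
    exact hC
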